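/- Let p be a strongly 312-avoiding permutation of length n with p(n) = 1. Then the smallest ⌈n/2⌉ entries of p appear in the last ⌈n/2⌉ positions in decreasing order; that is, p(n-j) = j+1 for 0 ≤ j ≤ ⌈n/2⌉ - 1. -/
import Mathlib

def Avoids312 {n : ℕ} (p : Equiv.Perm (Fin n)) : Prop :=
  ¬ ∃ a b c : Fin n, a < b ∧ b < c ∧ p b < p c ∧ p c < p a

def StronglyAvoids312 {n : ℕ} (p : Equiv.Perm (Fin n)) : Prop :=
  Avoids312 p ∧ Avoids312 (p * p)

/-- The smallest ⌈n/2⌉ entries of a strongly 312-avoiding permutation ending in 1 appear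
in the last ⌈n/2⌉ positions in decreasing order (0-indexed: p(n-1-j) = j). -/
theorem decreasing_tail {n : ℕ} (hn : 1 ≤ n) (p : Equiv.Perm (Fin n))
    (hp : StronglyAvoids312 p) (hlast : (p ⟨n - 1, by omega⟩ : ℕ) = 0) :
    ∀ j : ℕ, j < (n + 1) / 2 → (p ⟨n - 1 - j, by omega⟩ : ℕ) = j := by
  obtain ⟨hp1, hp2⟩ := hp
  unfold Avoids312 at hp1 hp2
  intro j
  induction j using Nat.strong_induction_on with
  | _ j IH =>
  intro hj
  rcases Nat.eq_zero_or_pos j with hj0 | hj1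
  · subst hj0; exact hlast
  have hj2 : 2 * j + 1 ≤ n := by omega
  have H0 : ∀ i, i < j → (p ⟨n - 1 - i, by omega⟩ : ℕ) = i := fun i hi => IH i hi (by omega)
  -- tail positions
  have htail : ∀ x : Fin n, n - 1 - j < (x : ℕ) → (p x : ℕ) = n - 1 - (x : ℕ) := by
    intro x hx
    have hxlt := x.isLt
    have h2 := H0 (n - 1 - (x : ℕ)) (by omega)
    have hxe : (⟨n - 1 - (n - 1 - (x : ℕ)), by omega⟩ : Fin n) = x := by
      apply Fin.ext; simp only []; omega
    rw [hxe] at h2; exact h2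
  -- front positions
  have hfront : ∀ x : Fin n, (x : ℕ) ≤ n - 1 - j → j ≤ (p x : ℕ) := by
    intro x hx
    by_contra h
    push_neg at h
    have h2 := H0 ((p x : ℕ)) (by omega)
    have h3 : p ⟨n - 1 - (p x : ℕ), by omega⟩ = p x := Fin.ext (by rw [h2])
    have h5 : n - 1 - (p x : ℕ) = (x : ℕ) := congrArg Fin.val (p.injective h3)
    omega
  -- preimages of values ≥ j are front positions
  have hvalpos : ∀ x : Fin n, j ≤ (p x : ℕ) → (x : ℕ) ≤ n - 1 - j := by
    intro x hv
    by_contra h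
    push_neg at h
    have h2 := htail x h
    have := x.isLt
    omega
  -- injectivity helpers at value level
  have hinjv : ∀ x y : Fin n, (p x : ℕ) = (p y : ℕ) → (x : ℕ) = (y : ℕ) :=
    fun x y h => congrArg Fin.val (p.injective (Fin.ext h))
  have hposinj : ∀ x y : Fin n, (x : ℕ) = (y : ℕ) → (p x : ℕ) = (p y : ℕ) :=
    fun x y h => congrArg Fin.val (congrArg p (Fin.ext h))
  -- opaque positions
  obtain ⟨M, hMv⟩ : ∃ M : Fin n, (M : ℕ) = n - 1 - j := ⟨⟨n - 1 - j, by omega⟩, rfl⟩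
  obtain ⟨Z, hZv⟩ : ∃ Z : Fin n, (Z : ℕ) = 0 := ⟨⟨0, by omega⟩, rfl⟩
  obtain ⟨N1, hN1v⟩ : ∃ N1 : Fin n, (N1 : ℕ) = n - 1 := ⟨⟨n - 1, by omega⟩, rfl⟩
  have hpN1v : (p N1 : ℕ) = 0 := by
    have : N1 = ⟨n - 1, by omega⟩ := Fin.ext hN1v
    rw [this]; exact hlast
  have PN1Z : p N1 = Z := Fin.ext (by omega)
  have hMeq : (⟨n - 1 - j, by omega⟩ : Fin n) = M := Fin.ext hMv.symm
  rw [hMeq]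
  by_contra hne
  have hjkle : j ≤ (p M : ℕ) := hfront M (le_of_eq hMv)
  have hjk' : j < (p M : ℕ) := by omega
  have hkn : (p M : ℕ) < n := (p M).isLt
  -- A : position of value j
  obtain ⟨A, hpAv⟩ : ∃ A : Fin n, (p A : ℕ) = j :=
    ⟨p.symm ⟨j, by omega⟩, by rw [Equiv.apply_symm_apply]⟩
  have haM : (A : ℕ) ≤ n - 1 - j := hvalpos A (le_of_eq hpAv.symm)
  have haM' : (A : ℕ) < n - 1 - j := by
    have : (A : ℕ) ≠ (M : ℕ) := fun h => by have := hposinj A M h; omega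
    omega
  have hp0j : j ≤ (p Z : ℕ) := hfront Z (by omega)
  -- p 0 < p M
  have hp0k : (p Z : ℕ) < (p M : ℕ) := by
    rcases Nat.eq_zero_or_pos (A : ℕ) with hA0 | hA0
    · have := hposinj Z A (by omega)
      omega
    · by_contra hcon
      push_neg at hcon
      have hZM : (Z : ℕ) ≠ (M : ℕ) := by omega
      have hcon' : (p M : ℕ) < (p Z : ℕ) := by
        have : (p M : ℕ) ≠ (p Z : ℕ) := fun h => hZM (hinjv M Z h).symm
        omega
      exact hp1 ⟨Z, A, M, by rw [Fin.lt_def]; omega, by rw [Fin.lt_def]; omega,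
        by rw [Fin.lt_def]; omega, by rw [Fin.lt_def]; omega⟩
  -- X0 : position of value n-1
  obtain ⟨X0, hpX0v⟩ : ∃ X0 : Fin n, (p X0 : ℕ) = n - 1 :=
    ⟨p.symm ⟨n - 1, by omega⟩, by rw [Equiv.apply_symm_apply]⟩
  have hx0M : (X0 : ℕ) ≤ n - 1 - j := hvalpos X0 (by omega)
  rcases le_or_gt (p M : ℕ) (n - 1 - j) with hkm | hkm
  · -- CASE A : p M ≤ n-1-j
    have hkn1 : (p M : ℕ) < n - 1 := by omega
    have hx0M' : (X0 : ℕ) < n - 1 - j := by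
      have : (X0 : ℕ) ≠ (M : ℕ) := fun h => by have := hposinj X0 M h; omega
      omega
    -- K1 : the position (p M) - 1, and W its preimage
    obtain ⟨K1, hK1v⟩ : ∃ K1 : Fin n, (K1 : ℕ) = (p M : ℕ) - 1 :=
      ⟨⟨(p M : ℕ) - 1, by omega⟩, rfl⟩
    obtain ⟨W, hpWK⟩ : ∃ W : Fin n, p W = K1 := ⟨p.symm K1, Equiv.apply_symm_apply p K1⟩
    have hpWv : (p W : ℕ) = (p M : ℕ) - 1 := by rw [hpWK]; exact hK1v
    have hwM : (W : ℕ) ≤ n - 1 - j := hvalpos W (by omega)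
    have hwM' : (W : ℕ) < n - 1 - j := by
      have : (W : ℕ) ≠ (M : ℕ) := fun h => by have := hposinj W M h; omega
      omega
    -- w < x0
    have hwx0 : (W : ℕ) < (X0 : ℕ) := by
      rcases lt_trichotomy ((W : ℕ)) ((X0 : ℕ)) with h | h | h
      · exact h
      · exfalso; have := hposinj W X0 h; omega
      · exfalso
        exact hp1 ⟨X0, W, M, by rw [Fin.lt_def]; omega, by rw [Fin.lt_def]; omega,
          by rw [Fin.lt_def]; omega, by rw [Fin.lt_def]; omega⟩
    -- pigeonhole : p K1 > p M
    have hpk1 : (p M : ℕ) < (p K1 : ℕ) := by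
      by_contra hcon
      push_neg at hcon
      have hcon' : (p K1 : ℕ) < (p M : ℕ) := by
        have : (p K1 : ℕ) ≠ (p M : ℕ) := fun h => by have := hinjv K1 M h; omega
        omega
      have hall : ∀ x : Fin n, (x : ℕ) < (p M : ℕ) →
          j ≤ (p x : ℕ) ∧ (p x : ℕ) < (p M : ℕ) := by
        intro x hx
        refine ⟨hfront x (by omega), ?_⟩
        rcases lt_trichotomy ((x : ℕ)) ((p M : ℕ) - 1) with h | h | h
        · by_contra hc
          push_neg at hc
          have hne4 : (p x : ℕ) ≠ (p M : ℕ) := fun h2 => by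
            have := hinjv x M h2; omega
          have hc' : (p M : ℕ) < (p x : ℕ) := by omega
          exact hp1 ⟨x, K1, M, by rw [Fin.lt_def]; omega, by rw [Fin.lt_def]; omega,
            by rw [Fin.lt_def]; omega, by rw [Fin.lt_def]; omega⟩
        · have : x = K1 := Fin.ext (by omega)
          rw [this]; omega
        · omega
      have hle : (p M : ℕ) ≤ n := le_of_lt hkn
      have hinj : Function.Injective (fun x : Fin (p M : ℕ) =>
          (⟨(p (Fin.castLE hle x) : ℕ) - j, by
            have h9 := hall (Fin.castLE hle x) (by simp)
            omega⟩ : Fin ((p M : ℕ) - j))) := by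
        intro x y hxy
        simp only [Fin.mk.injEq] at hxy
        have hx := hall (Fin.castLE hle x) (by simp)
        have hy := hall (Fin.castLE hle y) (by simp)
        have h6 : (p (Fin.castLE hle x) : ℕ) = (p (Fin.castLE hle y) : ℕ) := by omega
        have h7 := hinjv _ _ h6
        simp only [Fin.coe_castLE] at h7
        exact Fin.ext h7
      have hcard := Fintype.card_le_of_injective _ hinj
      simp only [Fintype.card_fin] at hcard
      omega
    -- 312 pattern in p*p : (W, X0, N1)
    have PX0N1 : p X0 = N1 := Fin.ext (by omega)
    refine hp2 ⟨W, X0, N1, by rw [Fin.lt_def]; omega, by rw [Fin.lt_def]; omega, ?_, ?_⟩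
    · rw [Fin.lt_def, Equiv.Perm.mul_apply, Equiv.Perm.mul_apply, PX0N1, PN1Z]
      omega
    · rw [Fin.lt_def, Equiv.Perm.mul_apply, Equiv.Perm.mul_apply, PN1Z, hpWK]
      omega
  · -- CASE B : p M > n-1-j
    have hqM : (p (p M) : ℕ) = n - 1 - (p M : ℕ) := htail (p M) (by omega)
    rcases le_or_gt j (X0 : ℕ) with hbj | hbj
    · -- sub-case B1 : j ≤ x0
      obtain ⟨W2, hpW2⟩ : ∃ W2 : Fin n, p W2 = X0 := ⟨p.symm X0, Equiv.apply_symm_apply p X0⟩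
      have hw2M : (W2 : ℕ) ≤ n - 1 - j := hvalpos W2 (by rw [hpW2]; omega)
      have hw2M' : (W2 : ℕ) < n - 1 - j := by
        have : (W2 : ℕ) ≠ (M : ℕ) := fun h => by
          have := hposinj W2 M h
          rw [hpW2] at this
          omega
        omega
      have hp0n1 : (p Z : ℕ) < n - 1 := by
        have : (p Z : ℕ) ≠ n - 1 := fun h => by
          have := hinjv Z X0 (by omega)
          omega
        have := (p Z).isLt
        omega
      refine hp2 ⟨W2, M, N1, by rw [Fin.lt_def]; omega, by rw [Fin.lt_def]; omega, ?_, ?_⟩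
      · rw [Fin.lt_def, Equiv.Perm.mul_apply, Equiv.Perm.mul_apply, PN1Z]
        omega
      · rw [Fin.lt_def, Equiv.Perm.mul_apply, Equiv.Perm.mul_apply, PN1Z, hpW2]
        omega
    · -- sub-case B2 : x0 < j
      have hkn1 : (p M : ℕ) < n - 1 := by
        have : (p M : ℕ) ≠ n - 1 := fun h => by
          have := hinjv M X0 (by omega)
          omega
        omega
      have hax0 : (A : ℕ) < (X0 : ℕ) := by
        rcases lt_trichotomy ((A : ℕ)) ((X0 : ℕ)) with h | h | h
        · exact h
        · exfalso; have := hposinj A X0 h; omega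
        · exfalso
          exact hp1 ⟨X0, A, M, by rw [Fin.lt_def]; omega, by rw [Fin.lt_def]; omega,
            by rw [Fin.lt_def]; omega, by rw [Fin.lt_def]; omega⟩
      obtain ⟨J, hJv⟩ : ∃ J : Fin n, (J : ℕ) = j := ⟨⟨j, by omega⟩, rfl⟩
      have hpJk : (p M : ℕ) ≤ (p J : ℕ) := by
        rcases eq_or_lt_of_le (show j ≤ n - 1 - j by omega) with h | h
        · have := hposinj J M (by omega)
          omega
        · by_contra hc
          push_neg at hc
          exact hp1 ⟨X0, J, M, by rw [Fin.lt_def]; omega, by rw [Fin.lt_def]; omega,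
            by rw [Fin.lt_def]; omega, by rw [Fin.lt_def]; omega⟩
      have PAJ : p A = J := Fin.ext (by omega)
      have PX0N1 : p X0 = N1 := Fin.ext (by omega)
      refine hp2 ⟨A, X0, N1, by rw [Fin.lt_def]; omega, by rw [Fin.lt_def]; omega, ?_, ?_⟩
      · rw [Fin.lt_def, Equiv.Perm.mul_apply, Equiv.Perm.mul_apply, PX0N1, PN1Z]
        omega
      · rw [Fin.lt_def, Equiv.Perm.mul_apply, Equiv.Perm.mul_apply, PN1Z, PAJ]
        omega
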